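/- Let f be the inverse of h(u) = (1/2)u√(1+u²) + (1/2)ln(u + √(1+u²)). Let v : ℝ² → ℝ be differentiable at a point x₀. Then the function u : x ↦ f(v(x))² is differentiable at x₀ and its gradient satisfies ‖∇u(x₀)‖² = 4·f(v(x₀))²·‖∇v(x₀)‖²/(1 + f(v(x₀))²); in particular ‖∇u(x₀)‖² ≤ 4‖∇v(x₀)‖². -/

import Mathlib

/-- The change of variables `h(u) = (1/2)·u·√(1+u²) + (1/2)·ln(u + √(1+u²))`. -/
noncomputable def h (u : ℝ) : ℝ :=
  (1 / 2) * u * Real.sqrt (1 + u ^ 2) + (1 / 2) * Real.log (u + Real.sqrt (1 + u ^ 2))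

lemma sqrt_pos' (u : ℝ) : 0 < Real.sqrt (1 + u ^ 2) :=
  Real.sqrt_pos.2 (by positivity)

lemma sq_sqrt' (u : ℝ) : Real.sqrt (1 + u ^ 2) ^ 2 = 1 + u ^ 2 :=
  Real.sq_sqrt (by positivity)

lemma add_sqrt_pos (u : ℝ) : 0 < u + Real.sqrt (1 + u ^ 2) := by
  rcases le_or_gt 0 u with hu | hu
  · positivity
  · have h1 : -u < Real.sqrt (1 + u ^ 2) := by
      have : (-u) ^ 2 < Real.sqrt (1 + u ^ 2) ^ 2 := by
        rw [sq_sqrt']; nlinarith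
      nlinarith [sqrt_pos' u]
    linarith

lemma hasDerivAt_h (u : ℝ) : HasDerivAt h (Real.sqrt (1 + u ^ 2)) u := by
  have hs : HasDerivAt (fun t : ℝ => Real.sqrt (1 + t ^ 2))
      (u / Real.sqrt (1 + u ^ 2)) u := by
    have h1 : HasDerivAt (fun t : ℝ => 1 + t ^ 2) (2 * u) u := by
      simpa using ((hasDerivAt_pow 2 u).const_add 1)
    have h2 := (Real.hasDerivAt_sqrt (x := 1 + u ^ 2) (by positivity)).comp u h1
    refine h2.congr_deriv (Eq.symm ?_)
    field_simp
  have hpos := sqrt_pos' u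
  have hadd := add_sqrt_pos u
  have hlog : HasDerivAt (fun t : ℝ => Real.log (t + Real.sqrt (1 + t ^ 2)))
      ((1 + u / Real.sqrt (1 + u ^ 2)) / (u + Real.sqrt (1 + u ^ 2))) u := by
    have h2 := (Real.hasDerivAt_log hadd.ne').comp u ((hasDerivAt_id u).add hs)
    simp only [Function.comp_def, id_eq] at h2
    refine h2.congr_deriv (Eq.symm ?_)
    rw [div_eq_mul_inv, mul_comm]
  have hmul : HasDerivAt (fun t : ℝ => (1 / 2) * t * Real.sqrt (1 + t ^ 2))
      ((1 / 2) * Real.sqrt (1 + u ^ 2) + (1 / 2) * u * (u / Real.sqrt (1 + u ^ 2))) u := by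
    have := (((hasDerivAt_id u).const_mul (1/2 : ℝ)).mul hs)
    refine this.congr_deriv (Eq.symm ?_)
    simp only [id_eq]
    ring
  have := hmul.add (hlog.const_mul (1 / 2 : ℝ))
  refine this.congr_deriv (Eq.symm ?_)
  have hsq := sq_sqrt' u
  field_simp
  linear_combination (Real.sqrt (1 + u ^ 2) + u) * hsq

lemma strictMono_h : StrictMono h :=
  strictMono_of_deriv_pos fun u => by
    rw [(hasDerivAt_h u).deriv]; exact sqrt_pos' u

lemma hasDerivAt_f {f : ℝ → ℝ} (hf₁ : Function.LeftInverse f h)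
    (hf₂ : Function.RightInverse f h) (y : ℝ) :
    HasDerivAt f (Real.sqrt (1 + f y ^ 2))⁻¹ y := by
  have hsurj : Function.Surjective h := hf₂.surjective
  have hcont : Continuous f := by
    have := (StrictMono.orderIsoOfSurjective h strictMono_h hsurj).symm.continuous
    have heq : f = (StrictMono.orderIsoOfSurjective h strictMono_h hsurj).symm := by
      funext t
      apply strictMono_h.injective
      rw [hf₂ t]
      exact (StrictMono.orderIsoOfSurjective_self_symm_apply h strictMono_h hsurj t).symm
    rw [heq]; exact this
  exact HasDerivAt.of_local_left_inverse hcont.continuousAt (hasDerivAt_h (f y))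
    (sqrt_pos' (f y)).ne' (Filter.Eventually.of_forall hf₂)

/-- Let `f` be the inverse of `h` and let `v : ℝ² → ℝ` be differentiable at `x₀`.  Then
`u = f(v(·))²` is differentiable at `x₀` with
`‖∇u(x₀)‖² = 4·f(v(x₀))²·‖∇v(x₀)‖²/(1 + f(v(x₀))²)`;
in particular `‖∇u(x₀)‖² ≤ 4‖∇v(x₀)‖²`. -/
theorem gradient_of_f_sq (f : ℝ → ℝ)
    (hf₁ : Function.LeftInverse f h) (hf₂ : Function.RightInverse f h)
    (v : EuclideanSpace ℝ (Fin 2) → ℝ) (x₀ : EuclideanSpace ℝ (Fin 2))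
    (hv : DifferentiableAt ℝ v x₀) :
    DifferentiableAt ℝ (fun x => f (v x) ^ 2) x₀ ∧
      ‖gradient (fun x => f (v x) ^ 2) x₀‖ ^ 2
        = 4 * f (v x₀) ^ 2 * ‖gradient v x₀‖ ^ 2 / (1 + f (v x₀) ^ 2) ∧
      ‖gradient (fun x => f (v x) ^ 2) x₀‖ ^ 2 ≤ 4 * ‖gradient v x₀‖ ^ 2 := by
  set a := f (v x₀) with ha
  set c : ℝ := 2 * a * (Real.sqrt (1 + a ^ 2))⁻¹ with hc
  have hg : HasDerivAt (fun t => f t ^ 2) c (v x₀) := by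
    have := ((hasDerivAt_f hf₁ hf₂ (v x₀)).pow 2)
    refine this.congr_deriv (Eq.symm ?_)
    simp [hc, ha]
  have hF : HasFDerivAt (fun x => f (v x) ^ 2) (c • fderiv ℝ v x₀) x₀ :=
    hg.comp_hasFDerivAt x₀ hv.hasFDerivAt
  have hdiff : DifferentiableAt ℝ (fun x => f (v x) ^ 2) x₀ := hF.differentiableAt
  have hgrad : gradient (fun x => f (v x) ^ 2) x₀ = c • gradient v x₀ := by
    unfold gradient
    rw [hF.fderiv, map_smul]
  have hnorm : ‖gradient (fun x => f (v x) ^ 2) x₀‖ ^ 2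
      = c ^ 2 * ‖gradient v x₀‖ ^ 2 := by
    rw [hgrad, norm_smul]
    rw [mul_pow]
    simp [sq_abs]
  have hcsq : c ^ 2 = 4 * a ^ 2 / (1 + a ^ 2) := by
    rw [hc, mul_pow, mul_pow]
    rw [inv_pow, sq_sqrt' a, div_eq_mul_inv]
    norm_num
  have hpos : (0:ℝ) < 1 + a ^ 2 := by positivity
  refine ⟨hdiff, ?_, ?_⟩
  · rw [hnorm, hcsq]; ring
  · rw [hnorm, hcsq]
    rw [div_mul_eq_mul_div, div_le_iff₀ hpos]
    nlinarith [sq_nonneg a, sq_nonneg ‖gradient v x₀‖, sq_nonneg (a * ‖gradient v x₀‖)]
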